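/- arXiv:1410.4363 — 2 statements merged into one kernel-verified Lean document; each statement's English description precedes it below -/
import Mathlib

section
/- Let q and q′ be elements of finite order in Houghton's group H_n. Then q and q′ are conjugate in H_n if and only if they are conjugate in the full symmetric group Sym(S) of the set S = ℕ × {1,…,n} (equivalently, if and only if they have the same cycle type, i.e., the same number of disjoint cycles of each length m ≥ 2). -/
/-!
If `q ∈ H_n` has finite order `k` and eventually translates ray `x` by `m x`, then `q ^ k = 1`
eventually translates it by `k • m x`, so `m = 0` and `q` moves only finitely many points.
Given `c * q * c⁻¹ = q'` in `Sym(S)`, any permutation agreeing with `c` on the points moved by `q`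
also conjugates `q` to `q'`, and one such permutation moves only finitely many points, hence
lies in `H_n`.
-/

/-- `f : ℕ × Fin n → ℕ × Fin n` is eventually a translation with translation
vector `m : Fin n → ℤ`: on each ray `ℕ × {x}`, for all sufficiently large `i`,
`f` sends `(i, x)` to `(i + m x, x)`. -/
def EvTrans (n : ℕ) (f : ℕ × Fin n → ℕ × Fin n) (m : Fin n → ℤ) : Prop :=
  ∀ x : Fin n, ∃ z : ℕ, ∀ i : ℕ, z ≤ i →
    (f (i, x)).2 = x ∧ ((f (i, x)).1 : ℤ) = (i : ℤ) + m x

/-- Houghton's group `H_n`: the subgroup of the symmetric group on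
`S = ℕ × Fin n` consisting of the permutations that are eventually
translations on each ray. -/
def Houghton (n : ℕ) : Subgroup (Equiv.Perm (ℕ × Fin n)) where
  carrier := {f : Equiv.Perm (ℕ × Fin n) | ∃ m : Fin n → ℤ, EvTrans n (⇑f) m}
  one_mem' := ⟨0, fun x => ⟨0, fun i _ => by simp⟩⟩
  mul_mem' := by
    rintro a b ⟨ma, hA⟩ ⟨mb, hB⟩
    refine ⟨ma + mb, fun x => ?_⟩
    obtain ⟨za, hza⟩ := hA x
    obtain ⟨zb, hzb⟩ := hB x
    refine ⟨max zb ((za : ℤ) - mb x).toNat, fun i hi => ?_⟩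
    have hib : zb ≤ i := le_trans (le_max_left _ _) hi
    obtain ⟨h2, h1⟩ := hzb i hib
    have hbx : (⇑b) (i, x) = ((b (i, x)).1, x) := Prod.ext_iff.mpr ⟨rfl, h2⟩
    have hk : za ≤ (b (i, x)).1 := by
      have h3 : ((za : ℤ) - mb x) ≤ (i : ℤ) := by
        calc ((za : ℤ) - mb x) ≤ (((za : ℤ) - mb x).toNat : ℤ) := Int.self_le_toNat _
          _ ≤ (i : ℤ) := by exact_mod_cast le_trans (le_max_right _ _) hi
      have h4 : (za : ℤ) ≤ ((b (i, x)).1 : ℤ) := by rw [h1]; linarith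
      exact_mod_cast h4
    obtain ⟨h4, h5⟩ := hza (b (i, x)).1 hk
    constructor
    · show ((a * b) (i, x)).2 = x
      rw [Equiv.Perm.mul_apply, hbx]
      exact h4
    · show (((a * b) (i, x)).1 : ℤ) = (i : ℤ) + (ma + mb) x
      rw [Equiv.Perm.mul_apply, hbx, h5, h1, Pi.add_apply]
      ring
  inv_mem' := by
    rintro a ⟨m, hm⟩
    refine ⟨-m, fun x => ?_⟩
    obtain ⟨z, hz⟩ := hm x
    refine ⟨((z : ℤ) + m x).toNat, fun i hi => ?_⟩
    have h1 : (z : ℤ) + m x ≤ (i : ℤ) :=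
      le_trans (Int.self_le_toNat _) (by exact_mod_cast hi)
    have h0 : (0 : ℤ) ≤ (i : ℤ) - m x := by
      have hz0 : (0 : ℤ) ≤ (z : ℤ) := Int.natCast_nonneg z
      linarith
    set j := ((i : ℤ) - m x).toNat with hjdef
    have hj' : (j : ℤ) = (i : ℤ) - m x := Int.toNat_of_nonneg h0
    have hjz : z ≤ j := by
      have : (z : ℤ) ≤ (j : ℤ) := by rw [hj']; linarith
      exact_mod_cast this
    obtain ⟨h2, h3⟩ := hz j hjz
    have hfst : (a (j, x)).1 = i := by
      have : ((a (j, x)).1 : ℤ) = (i : ℤ) := by rw [h3, hj']; ring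
      exact_mod_cast this
    have hfix : (⇑a) (j, x) = (i, x) := Prod.ext_iff.mpr ⟨hfst, h2⟩
    have hinv : (⇑a⁻¹) (i, x) = (j, x) := by
      rw [← hfix]
      exact Equiv.symm_apply_apply a (j, x)
    constructor
    · rw [hinv]
    · rw [hinv]
      show (j : ℤ) = (i : ℤ) + (-m) x
      rw [hj', Pi.neg_apply]
      ring

namespace EvTrans

variable {n : ℕ} {f g : ℕ × Fin n → ℕ × Fin n} {a b : Fin n → ℤ}

theorem id : EvTrans n id 0 :=
  fun _ => ⟨0, fun _ _ => by simp⟩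

theorem unique (ha : EvTrans n f a) (hb : EvTrans n f b) : a = b := by
  funext x
  obtain ⟨za, hza⟩ := ha x
  obtain ⟨zb, hzb⟩ := hb x
  have := (hza (za + zb) (by omega)).2
  have := (hzb (za + zb) (by omega)).2
  linarith

theorem comp (hf : EvTrans n f a) (hg : EvTrans n g b) : EvTrans n (f ∘ g) (a + b) := by
  intro x
  obtain ⟨zf, hzf⟩ := hf x
  obtain ⟨zg, hzg⟩ := hg x
  refine ⟨zg + zf + (b x).natAbs, fun i hi => ?_⟩
  obtain ⟨hg₂, hg₁⟩ := hzg i (by omega)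
  obtain ⟨hf₂, hf₁⟩ := hzf (g (i, x)).1 (by omega)
  rw [Function.comp_apply, show g (i, x) = ((g (i, x)).1, x) from Prod.ext rfl hg₂]
  exact ⟨hf₂, by rw [hf₁, hg₁, Pi.add_apply]; ring⟩

theorem pow {q : Equiv.Perm (ℕ × Fin n)} (hq : EvTrans n q a) (k : ℕ) :
    EvTrans n ⇑(q ^ k) (k • a) := by
  induction k with
  | zero => simpa using EvTrans.id
  | succ k ih =>
    rw [pow_succ, succ_nsmul, Equiv.Perm.coe_mul]
    exact ih.comp hq

theorem eq_zero_of_pow_eq_one {q : Equiv.Perm (ℕ × Fin n)} (hq : EvTrans n q a) {k : ℕ}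
    (hk : 0 < k) (hqk : q ^ k = 1) : a = 0 := by
  have hka : k • a = 0 := by
    have := hq.pow k
    rw [hqk] at this
    exact this.unique EvTrans.id
  exact (smul_eq_zero.mp hka).resolve_left hk.ne'

theorem finite_moved_of_zero (hf : EvTrans n f 0) : {s | f s ≠ s}.Finite := by
  choose z hz using hf
  refine ((Set.finite_Iio (Finset.univ.sup z)).prod Set.finite_univ).subset ?_
  rintro ⟨i, x⟩ hmoved
  refine ⟨Set.mem_Iio.mpr ?_, trivial⟩
  by_contra! hi
  obtain ⟨h₂, h₁⟩ := hz x i ((Finset.le_sup (Finset.mem_univ x)).trans hi)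
  exact hmoved (Prod.ext (by simpa using h₁) h₂)

end EvTrans

theorem mem_houghton_of_finite_moved {n : ℕ} {h : Equiv.Perm (ℕ × Fin n)}
    (hh : {s | h s ≠ s}.Finite) : h ∈ Houghton n := by
  obtain ⟨N, hN⟩ := (hh.image Prod.fst).bddAbove
  refine ⟨0, fun x => ⟨N + 1, fun i hi => ?_⟩⟩
  have hfix : h (i, x) = (i, x) := by
    by_contra hmoved
    have := hN ⟨(i, x), hmoved, rfl⟩
    omega
  simp [hfix]

theorem finite_moved_of_mem_houghton {n : ℕ} {q : Equiv.Perm (ℕ × Fin n)}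
    (hq : q ∈ Houghton n) (hord : IsOfFinOrder q) : {s | q s ≠ s}.Finite := by
  obtain ⟨m, hm⟩ := hq
  obtain rfl := hm.eq_zero_of_pow_eq_one hord.orderOf_pos (pow_orderOf_eq_one q)
  exact hm.finite_moved_of_zero

namespace Equiv.Perm

variable {α : Type*}

theorem exists_finite_moved_eqOn (c : Perm α) {s : Set α} (hs : s.Finite) :
    ∃ h : Perm α, {x | h x ≠ x}.Finite ∧ Set.EqOn h c s := by
  classical
  have : Finite s := hs.to_subtype
  let B := s ∪ c '' s
  obtain ⟨σ, hσ⟩ := exists_extending_pair (β := B)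
    (fun a : s => ⟨a, Or.inl a.2⟩) (fun a : s => ⟨c a, Or.inr ⟨a, a.2, rfl⟩⟩)
    (fun a b hab => Subtype.ext (congrArg Subtype.val hab : _))
    (fun a b hab => Subtype.ext (c.injective (congrArg Subtype.val hab : _)))
  refine ⟨ofSubtype σ, (hs.union (hs.image c)).subset fun x hx => ?_, fun a ha => ?_⟩
  · by_contra hxB
    exact hx (ofSubtype_apply_of_not_mem σ hxB)
  · rw [ofSubtype_apply_of_mem σ (Or.inl ha)]
    exact congrArg Subtype.val (hσ ⟨a, ha⟩)

/-- `c⁻¹ * h` fixes every point moved by `q`, so it is disjoint from `q` and commutes with it. -/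
theorem conj_eq_of_eqOn_moved {h c q : Perm α} (hhc : Set.EqOn h c {x | q x ≠ x}) :
    h * q * h⁻¹ = c * q * c⁻¹ := by
  set d := c⁻¹ * h
  have hdisj : Disjoint d q := fun x => by
    by_cases hx : q x = x
    · exact Or.inr hx
    · exact Or.inl (by simp [d, hhc hx])
  calc h * q * h⁻¹ = c * (d * q * d⁻¹) * c⁻¹ := by simp only [d]; group
    _ = c * q * c⁻¹ := by rw [hdisj.commute.eq, mul_inv_cancel_right]

end Equiv.Perm

theorem houghton_conj_iff_conj_in_symmetric_group_general (n : ℕ)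
    (q q' : Equiv.Perm (ℕ × Fin n)) (hq : q ∈ Houghton n)
    (hord : IsOfFinOrder q) :
    (∃ h ∈ Houghton n, h * q * h⁻¹ = q') ↔ IsConj q q' := by
  refine ⟨fun ⟨h, _, hconj⟩ => isConj_iff.mpr ⟨h, hconj⟩, fun hconj => ?_⟩
  obtain ⟨c, rfl⟩ := isConj_iff.mp hconj
  obtain ⟨h, hh, hhc⟩ := c.exists_finite_moved_eqOn (finite_moved_of_mem_houghton hq hord)
  exact ⟨h, mem_houghton_of_finite_moved hh, Equiv.Perm.conj_eq_of_eqOn_moved hhc⟩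

/-- Two finite-order elements `q, q'` of Houghton's group
`H_n` are conjugate in `H_n` if and only if they are conjugate in the full
symmetric group of `S = ℕ × Fin n` (equivalently, iff they have the same
cycle type). -/
theorem houghton_conj_iff_conj_in_symmetric_group (n : ℕ) (hn : 1 ≤ n)
    (q q' : Equiv.Perm (ℕ × Fin n)) (hq : q ∈ Houghton n)
    (hq' : q' ∈ Houghton n) (hord : IsOfFinOrder q) (hord' : IsOfFinOrder q') :
    (∃ h ∈ Houghton n, h * q * h⁻¹ = q') ↔ IsConj q q' :=
  houghton_conj_iff_conj_in_symmetric_group_general n q q' hq hord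
end

section
/- For every infinite cyclic subgroup K of Houghton's group H_n, the normalizer of K in H_n equals the centralizer of K in H_n: N_{H_n}(K) = C_{H_n}(K). -/
/-! Taking translation vectors is a homomorphism `H_n → ℤⁿ` whose kernel consists of finitary
permutations, which have finite order. Hence a generator `g` of `K` has non-zero image, of infinite
order as `ℤⁿ` is torsion-free. If `h` normalizes `K` then `h g h⁻¹ = g ^ k`, and both sides have
the same image since `ℤⁿ` is abelian, which forces `k = 1`. -/

open Equiv Subgroup

theorem Equiv.Perm.isOfFinOrder_of_finite_setOf_apply_ne {α : Type*} {f : Perm α}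
    (hf : {x | f x ≠ x}.Finite) : IsOfFinOrder f := by
  classical
  have : Finite {x // f x ≠ x} := hf.to_subtype
  rw [← ofSubtype_subtypePerm (p := fun x => f x ≠ x) (fun _ => f.injective.ne_iff) fun _ => id]
  exact ofSubtype.isOfFinOrder (isOfFinOrder_of_finite _)

theorem commute_of_mul_mul_inv_eq_zpow {G A : Type*} [Group G] [CommGroup A] (φ : G →* A)
    {g h : G} (hg : ¬IsOfFinOrder (φ g)) {k : ℤ} (hk : h * g * h⁻¹ = g ^ k) : Commute h g := by
  have hφ : φ g ^ k = φ g ^ (1 : ℤ) := by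
    rw [← map_zpow, ← hk, map_mul, map_mul, map_inv, mul_inv_cancel_comm, zpow_one]
  rw [injective_zpow_iff_not_isOfFinOrder.mpr hg hφ, zpow_one] at hk
  exact mul_inv_eq_iff_eq_mul.mp hk

namespace EvTrans

variable {n : ℕ}

theorem mul {a b : Perm (ℕ × Fin n)} {ma mb : Fin n → ℤ} (ha : EvTrans n a ma)
    (hb : EvTrans n b mb) : EvTrans n ⇑(a * b) (ma + mb) := by
  intro x
  obtain ⟨za, hza⟩ := ha x
  obtain ⟨zb, hzb⟩ := hb x
  refine ⟨max zb (za - mb x).toNat, fun i hi => ?_⟩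
  obtain ⟨hbx, hbi⟩ := hzb i (le_of_max_le_left hi)
  obtain ⟨hax, hai⟩ := hza (b (i, x)).1 (by omega)
  rw [Perm.mul_apply, show b (i, x) = ((b (i, x)).1, x) from Prod.ext rfl hbx]
  exact ⟨hax, by rw [hai, hbi, Pi.add_apply]; ring⟩

theorem unique_s12 {f : ℕ × Fin n → ℕ × Fin n} {m m' : Fin n → ℤ} (h : EvTrans n f m)
    (h' : EvTrans n f m') : m = m' := by
  funext x
  obtain ⟨z, hz⟩ := h x
  obtain ⟨z', hz'⟩ := h' x
  have := (hz _ (le_max_left z z')).2.symm.trans (hz' _ (le_max_right z z')).2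
  omega

theorem finite_setOf_apply_ne {f : ℕ × Fin n → ℕ × Fin n} (hf : EvTrans n f 0) :
    {q | f q ≠ q}.Finite := by
  choose z hz using hf
  refine ((Set.finite_Iio (Finset.univ.sup z)).prod Set.finite_univ).subset ?_
  rintro ⟨i, x⟩ hq
  refine ⟨Set.mem_Iio.mpr (lt_of_not_ge fun hi => hq ?_), trivial⟩
  obtain ⟨hx, hi⟩ := hz x i ((Finset.le_sup (Finset.mem_univ x)).trans hi)
  exact Prod.ext (by simpa using hi) hx

end EvTrans

namespace Houghton

variable {n : ℕ}

/-- Houghton's homomorphism `H_n → ℤⁿ`. -/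
noncomputable def translation (n : ℕ) : Houghton n →* Multiplicative (Fin n → ℤ) :=
  MonoidHom.mk' (fun f => .ofAdd f.2.choose) fun a b =>
    congrArg Multiplicative.ofAdd <|
      (a * b).2.choose_spec.unique_s12 (a.2.choose_spec.mul b.2.choose_spec)

theorem evTrans_translation (f : Houghton n) :
    EvTrans n f (translation n f).toAdd :=
  f.2.choose_spec

theorem not_isOfFinOrder_translation {g : Houghton n}
    (hg : ¬IsOfFinOrder (g : Perm (ℕ × Fin n))) : ¬IsOfFinOrder (translation n g) := by
  intro hfin
  have h0 := evTrans_translation g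
  rw [hfin.eq_one', toAdd_one] at h0
  exact hg (Perm.isOfFinOrder_of_finite_setOf_apply_ne h0.finite_setOf_apply_ne)

end Houghton

theorem houghton_normalizer_eq_centralizer_of_infinite_cyclic_general (n : ℕ)
    (K : Subgroup (Equiv.Perm (ℕ × Fin n)))
    (hK : K ≤ Houghton n) (hcyc : IsCyclic ↥K) (hinf : Infinite K) :
    Houghton n ⊓ Subgroup.normalizer (K : Set (Equiv.Perm (ℕ × Fin n))) =
      Houghton n ⊓ Subgroup.centralizer (K : Set (Equiv.Perm (ℕ × Fin n))) := by
  refine le_antisymm (fun h ⟨hH, hN⟩ => ⟨hH, ?_⟩) (inf_le_inf_left _ (centralizer_le_normalizer _))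
  obtain ⟨g, rfl⟩ := K.isCyclic_iff_exists_zpowers_eq_top.mp hcyc
  have hg : g ∈ Houghton n := hK (mem_zpowers g)
  have hg_inf : ¬IsOfFinOrder g := infinite_zpowers.mp (Set.infinite_coe_iff.mp hinf)
  obtain ⟨k, hk⟩ := mem_zpowers_iff.mp ((mem_normalizer_iff.mp hN g).mp (mem_zpowers g))
  have hcomm : Commute h g := by
    have := commute_of_mul_mul_inv_eq_zpow (Houghton.translation n)
      (Houghton.not_isOfFinOrder_translation (g := ⟨g, hg⟩) hg_inf)
      (h := (⟨h, hH⟩ : Houghton n)) (Subtype.ext hk.symm)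
    exact this.map (Houghton n).subtype
  rintro _ ⟨j, rfl⟩
  exact (hcomm.zpow_right j).eq.symm

/-- For every infinite cyclic subgroup `K` of Houghton's
group `H_n`, the normalizer of `K` in `H_n` equals the centralizer of `K` in
`H_n`. -/
theorem houghton_normalizer_eq_centralizer_of_infinite_cyclic (n : ℕ)
    (hn : 1 ≤ n) (K : Subgroup (Equiv.Perm (ℕ × Fin n)))
    (hK : K ≤ Houghton n) (hcyc : IsCyclic ↥K) (hinf : Infinite K) :
    Houghton n ⊓ Subgroup.normalizer (K : Set (Equiv.Perm (ℕ × Fin n))) =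
      Houghton n ⊓ Subgroup.centralizer (K : Set (Equiv.Perm (ℕ × Fin n))) :=
  houghton_normalizer_eq_centralizer_of_infinite_cyclic_general n K hK hcyc hinf
end
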